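/- arXiv:0904.1593 — 2 statements merged into one kernel-verified Lean document; each statement's English description precedes it below -/
import Mathlib

section
/- With $w_1, w_2, w_3, w_4$ defined as in section 2.2 in terms of the basis $\tilde u_1,\dots,\tilde u_4$, and the skew form $\langle\cdot,\cdot\rangle$ on the free module extended bilinearly over the scalars from the form on the $\tilde u_i$ with $\langle \tilde u_1,\tilde u_4\rangle = C \langle \tilde u_2, \tilde u_3\rangle \ne 0$ and all other pairings among basis vectors zero: one has $\langle w_1, w_2 \rangle = 0$ and $\langle w_1, w_3 \rangle = 0$. Consequently, with $F^1 = Rw_1$, $F^0 = Rw_1 + Rw_2$, $F^{-1} = Rw_1+Rw_2+Rw_3$ over the scalar ring $R$, the orthogonality $\langle F^p, F^{-p}\rangle = 0$ holds for all $p$ (the content being $\langle F^1, F^{-1}\rangle = 0$ and $\langle F^0, F^0 \rangle = 0$). -/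
/-!
Expanding bilinearly, `⟨w₁, w₂⟩ = Cλt·c + Cλt·((a - 1)c - ac)` and `⟨w₁, w₃⟩ = Cλt·c - Cλt·c`:
the pairing of `ũ₁` with the `ũ₄`-components cancels that of the `ũ₂, ũ₃`-components of `w₁`.
Since `2` is invertible, the skew form is alternating, so each `wᵢ` is isotropic; the
orthogonality of the spans then follows from that of their generators.
-/

namespace LinearMap

variable {R M : Type*} [CommRing R] [AddCommGroup M] [Module R M]

theorem isAlt_of_eq_neg_flip_of_isUnit_two {B : M →ₗ[R] M →ₗ[R] R}
    (hskew : ∀ x y, B x y = -B y x) (h2 : IsUnit (2 : R)) : B.IsAlt := fun x =>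
  h2.mul_right_eq_zero.mp (by linear_combination hskew x x)

theorem apply_eq_zero_of_mem_span (B : M →ₗ[R] M →ₗ[R] R) {S T : Set M}
    (h : ∀ s ∈ S, ∀ r ∈ T, B s r = 0) :
    ∀ x ∈ Submodule.span R S, ∀ y ∈ Submodule.span R T, B x y = 0 := by
  intro x hx y hy
  have hS : S ⊆ ker (B.flip y) := fun s hs =>
    (Submodule.span_le.mpr (fun r hr => h s hs r hr) : Submodule.span R T ≤ ker (B s)) hy
  exact Submodule.span_le.mpr hS hx

end LinearMap

theorem stmt10_general {R M : Type*} [CommRing R] [Algebra ℂ R]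
    [AddCommGroup M] [Module R M]
    (B : M →ₗ[R] M →ₗ[R] R) (hskew : ∀ x y, B x y = -B y x)
    (u : Fin 4 → M) (t : R) (a C lam : ℂ) (c : R)
    (h14 : B (u 0) (u 3) = algebraMap ℂ R C * c) (h23 : B (u 1) (u 2) = c)
    (h12 : B (u 0) (u 1) = 0) (h13 : B (u 0) (u 2) = 0)
    (h24 : B (u 1) (u 3) = 0) (h34 : B (u 2) (u 3) = 0)
    (w1 w2 w3 : M)
    (hw1 : w1 = u 0 + (algebraMap ℂ R (C * lam) * t) •
        (u 1 + algebraMap ℂ R a • u 2 + (algebraMap ℂ R (lam / 2) * t) • u 3))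
    (hw2 : w2 = u 1 + algebraMap ℂ R (a - 1) • u 2 + (algebraMap ℂ R lam * t) • u 3)
    (hw3 : w3 = -u 2 + (algebraMap ℂ R lam * t) • u 3) :
    B w1 w2 = 0 ∧ B w1 w3 = 0 ∧
    (∀ x ∈ Submodule.span R ({w1} : Set M),
      ∀ y ∈ Submodule.span R ({w1, w2, w3} : Set M), B x y = 0) ∧
    (∀ x ∈ Submodule.span R ({w1, w2} : Set M),
      ∀ y ∈ Submodule.span R ({w1, w2} : Set M), B x y = 0) := by
  have hAlt : B.IsAlt := B.isAlt_of_eq_neg_flip_of_isUnit_two hskew <| by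
    simpa only [map_ofNat] using (two_ne_zero : (2 : ℂ) ≠ 0).isUnit.map (algebraMap ℂ R)
  have hflip : ∀ i j, B (u j) (u i) = -B (u i) (u j) := fun i j => hskew _ _
  have hB12 : B w1 w2 = 0 := by
    simp only [hw1, hw2, map_add, map_smul, LinearMap.add_apply, LinearMap.smul_apply,
      smul_eq_mul, hflip 1 2, hflip 1 3, hflip 2 3, hAlt.self_eq_zero, h12, h13, h14, h23, h24,
      h34, map_mul, map_sub, map_one]
    ring
  have hB13 : B w1 w3 = 0 := by
    simp only [hw1, hw3, map_add, map_neg, map_smul, LinearMap.add_apply, LinearMap.smul_apply,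
      smul_eq_mul, hflip 2 3, hAlt.self_eq_zero, h13, h14, h23, h24, h34, map_mul]
    ring
  have hB21 : B w2 w1 = 0 := by rw [hskew, hB12, neg_zero]
  refine ⟨hB12, hB13, B.apply_eq_zero_of_mem_span ?_, B.apply_eq_zero_of_mem_span ?_⟩ <;>
    simp only [Set.mem_insert_iff, Set.mem_singleton_iff, forall_eq_or_imp, forall_eq,
      hAlt.self_eq_zero, true_and, and_true]
  exacts [⟨hB12, hB13⟩, ⟨hB12, hB21⟩]

/-- Orthogonality (2.2.4): with the skew form satisfying `⟨ũ₁,ũ₄⟩ = C⟨ũ₂,ũ₃⟩ ≠ 0`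
and all other basis pairings zero, and `w₁,…,w₄` as in (2.2.1), one has
`⟨w₁,w₂⟩ = 0` and `⟨w₁,w₃⟩ = 0`; consequently `⟨F^p, F^{-p}⟩ = 0` for the filtration
`F¹ = Rw₁ ⊆ F⁰ = Rw₁+Rw₂ ⊆ F⁻¹ = Rw₁+Rw₂+Rw₃`. -/
theorem stmt10 {R M : Type*} [CommRing R] [Algebra ℂ R]
    [AddCommGroup M] [Module R M]
    (B : M →ₗ[R] M →ₗ[R] R) (hskew : ∀ x y, B x y = -B y x)
    (u : Fin 4 → M) (t : R) (a C lam : ℂ) (c : R) (hc : c ≠ 0)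
    (h14 : B (u 0) (u 3) = algebraMap ℂ R C * c) (h23 : B (u 1) (u 2) = c)
    (h12 : B (u 0) (u 1) = 0) (h13 : B (u 0) (u 2) = 0)
    (h24 : B (u 1) (u 3) = 0) (h34 : B (u 2) (u 3) = 0)
    (hdiag : ∀ i, B (u i) (u i) = 0)
    (w1 w2 w3 w4 : M)
    (hw1 : w1 = u 0 + (algebraMap ℂ R (C * lam) * t) •
        (u 1 + algebraMap ℂ R a • u 2 + (algebraMap ℂ R (lam / 2) * t) • u 3))
    (hw2 : w2 = u 1 + algebraMap ℂ R (a - 1) • u 2 + (algebraMap ℂ R lam * t) • u 3)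
    (hw3 : w3 = -u 2 + (algebraMap ℂ R lam * t) • u 3)
    (hw4 : w4 = u 3) :
    B w1 w2 = 0 ∧ B w1 w3 = 0 ∧
    (∀ x ∈ Submodule.span R ({w1} : Set M),
      ∀ y ∈ Submodule.span R ({w1, w2, w3} : Set M), B x y = 0) ∧
    (∀ x ∈ Submodule.span R ({w1, w2} : Set M),
      ∀ y ∈ Submodule.span R ({w1, w2} : Set M), B x y = 0) :=
  stmt10_general B hskew u t a C lam c h14 h23 h12 h13 h24 h34 w1 w2 w3 hw1 hw2 hw3
end

section
/- Let $V$ be a free module of rank 5 over $R = \mathbb{C}[[t_1,\dots,t_n]]$ with basis $w_0', w_1, w_2, w_3, w_4$, equipped with commuting derivations $\xi_k$ (over $\xi_k = t_k\partial_{t_k}$ on $R$) satisfying $\xi_k w_1 = C\lambda t_1\cdots t_n w_2$, $\xi_k w_2 = w_3$, $\xi_k w_3 = \lambda t_1\cdots t_n w_4$, $\xi_k w_4 = 0$ for all $k$, where $\lambda \ne 0$. Suppose $w'_0 = \tilde u'_0 + \sum_{j=1}^4 h_j w_j$ with $h_j \in R$ and $\xi_k \tilde u'_0 = -c_k \tilde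 u_3$ where $\tilde u_3 = -w_3 + \lambda t_1\cdots t_n w_4$. If for every $k$ one has $\xi_k w'_0 \in R w'_0 + R w_1 + R w_2 + R w_3$, i.e. $\lambda t_1 \cdots t_n (h_3 - c_k) + \xi_k h_4 = 0$ for all $k$, then $c_1 = c_2 = \cdots = c_n$. -/
/-- The logarithmic derivation `ξ_k = t_k ∂/∂t_k` on `ℂ[[t₁,…,tₙ]]`. -/
noncomputable def xi {n : ℕ} (k : Fin n) (h : MvPowerSeries (Fin n) ℂ) :
    MvPowerSeries (Fin n) ℂ :=
  fun m => (m k : ℂ) * MvPowerSeries.coeff m h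

/-- The contradiction step in Theorem 2.3: in a free module of rank 5 over
`R = ℂ[[t₁,…,tₙ]]` with basis `ũ'₀, w₁, w₂, w₃, w₄` and logarithmic derivatives
`ξ_k` satisfying `ξ_k w₁ = Cλt₁⋯tₙ w₂`, `ξ_k w₂ = w₃`, `ξ_k w₃ = λt₁⋯tₙ w₄`,
`ξ_k w₄ = 0`, `ξ_k ũ'₀ = -c_k ũ₃` with `ũ₃ = -w₃ + λt₁⋯tₙ w₄` and `λ ≠ 0`: if
`w'₀ = ũ'₀ + Σ hⱼ wⱼ` satisfies `ξ_k w'₀ ∈ R w'₀ + R w₁ + R w₂ + R w₃` for every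
`k`, then `c₁ = ⋯ = cₙ`. -/
theorem stmt16 {n : ℕ} (hn : 2 ≤ n)
    {M : Type*} [AddCommGroup M] [Module (MvPowerSeries (Fin n) ℂ) M]
    (b : Module.Basis (Fin 5) (MvPowerSeries (Fin n) ℂ) M)
    (ξ : Fin n → M →+ M)
    (hLeib : ∀ (k : Fin n) (r : MvPowerSeries (Fin n) ℂ) (m : M),
      ξ k (r • m) = xi k r • m + r • ξ k m)
    (Cc lam : ℂ) (hlam : lam ≠ 0) (c : Fin n → ℂ)
    (hb1 : ∀ k, ξ k (b 1) =
      (algebraMap ℂ (MvPowerSeries (Fin n) ℂ) (Cc * lam) *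
        ∏ i : Fin n, MvPowerSeries.X i) • b 2)
    (hb2 : ∀ k, ξ k (b 2) = b 3)
    (hb3 : ∀ k, ξ k (b 3) =
      (algebraMap ℂ (MvPowerSeries (Fin n) ℂ) lam *
        ∏ i : Fin n, MvPowerSeries.X i) • b 4)
    (hb4 : ∀ k, ξ k (b 4) = 0)
    (hb0 : ∀ k, ξ k (b 0) =
      -(algebraMap ℂ (MvPowerSeries (Fin n) ℂ) (c k)) •
        (-(b 3) + (algebraMap ℂ (MvPowerSeries (Fin n) ℂ) lam *
          ∏ i : Fin n, MvPowerSeries.X i) • b 4))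
    (h : Fin 5 → MvPowerSeries (Fin n) ℂ)
    (w0' : M)
    (hw0' : w0' = b 0 + h 1 • b 1 + h 2 • b 2 + h 3 • b 3 + h 4 • b 4)
    (htrans : ∀ k, ξ k w0' ∈
      Submodule.span (MvPowerSeries (Fin n) ℂ) ({w0', b 1, b 2, b 3} : Set M)) :
    ∀ k k' : Fin n, c k = c k' := by
  classical
  have hR : True := trivial
  set A := algebraMap ℂ (MvPowerSeries (Fin n) ℂ) with hA
  set P : MvPowerSeries (Fin n) ℂ := ∏ i : Fin n, MvPowerSeries.X i with hPdef
  set m₁ : Fin n →₀ ℕ := ∑ i : Fin n, Finsupp.single i 1 with hm₁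
  have hP : P = MvPowerSeries.monomial m₁ 1 := by
    rw [hPdef, hm₁]
    induction (Finset.univ : Finset (Fin n)) using Finset.induction_on with
    | empty => simp [MvPowerSeries.monomial_zero_one]
    | insert _ _ hx ih =>
        rw [Finset.prod_insert hx, Finset.sum_insert hx, ih, MvPowerSeries.X_def,
          MvPowerSeries.monomial_mul_monomial, one_mul]
  have hm₁k : ∀ k : Fin n, m₁ k = 1 := by
    intro k; simp [hm₁, Finsupp.finset_sum_apply, Finsupp.single_apply]
  -- the key power series identity for each k
  have hkey : ∀ k : Fin n,
      -(c k * lam) + MvPowerSeries.coeff (0 : Fin n →₀ ℕ) (h 3) * lam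
        + MvPowerSeries.coeff m₁ (h 4) = 0 := by
    intro k
    -- explicit expansion of ξ k w0'
    have hexp : ξ k w0' =
        (A (c k)) • b 3 - (A (c k) * (A lam * P)) • b 4
        + xi k (h 1) • b 1
        + (h 1 * (A (Cc * lam) * P)) • b 2 + xi k (h 2) • b 2
        + h 2 • b 3 + xi k (h 3) • b 3
        + (h 3 * (A lam * P)) • b 4 + xi k (h 4) • b 4 := by
      rw [hw0']
      simp only [map_add, hLeib, hb0 k, hb1 k, hb2 k, hb3 k, hb4 k,
        smul_add, smul_neg, neg_smul, smul_smul, smul_zero]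
      rw [neg_neg, neg_mul, neg_smul, add_zero]; abel
    obtain ⟨a, z, hz, heq⟩ := Submodule.mem_span_insert.1 (htrans k)
    have hzc : ∀ j : Fin 5, j = 0 ∨ j = 4 → b.coord j z = 0 := by
      intro j hj
      have hle : Submodule.span (MvPowerSeries (Fin n) ℂ) ({b 1, b 2, b 3} : Set M) ≤
          LinearMap.ker (b.coord j) := by
        rw [Submodule.span_le]
        intro x hx
        rcases hx with hx | hx | hx <;> subst hx <;>
          simp only [SetLike.mem_coe, LinearMap.mem_ker, Module.Basis.coord_apply,
            Module.Basis.repr_self] <;>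
          rcases hj with hj | hj <;> subst hj <;> simp [Finsupp.single_apply]
      exact hle hz
    have hc0z := hzc 0 (Or.inl rfl)
    have hc4z := hzc 4 (Or.inr rfl)
    -- coordinate 0
    have h0L : b.coord 0 (ξ k w0') = 0 := by
      rw [hexp]
      simp [Module.Basis.coord_apply, Module.Basis.repr_self, Finsupp.single_apply]
    have h0w : b.coord 0 w0' = 1 := by
      rw [hw0']
      simp [Module.Basis.coord_apply, Module.Basis.repr_self, Finsupp.single_apply]
    have h4w : b.coord 4 w0' = h 4 := by
      rw [hw0']
      simp [Module.Basis.coord_apply, Module.Basis.repr_self, Finsupp.single_apply]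
    have ha : a = 0 := by
      have := congrArg (b.coord 0) heq
      rw [h0L, map_add, map_smul, h0w, hc0z] at this
      simpa using this.symm
    -- coordinate 4
    have h4L : b.coord 4 (ξ k w0') =
        -(A (c k) * (A lam * P)) + h 3 * (A lam * P) + xi k (h 4) := by
      rw [hexp]
      simp [Module.Basis.coord_apply, Module.Basis.repr_self, Finsupp.single_apply, sub_eq_add_neg]
    have hps : -(A (c k) * (A lam * P)) + h 3 * (A lam * P) + xi k (h 4) = 0 := by
      have := congrArg (b.coord 4) heq
      rw [h4L, map_add, map_smul, h4w, hc4z, ha] at this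
      simpa using this
    -- apply coeff at m₁
    have := congrArg (MvPowerSeries.coeff m₁) hps
    rw [map_add, map_add, map_neg, map_zero] at this
    have e1 : MvPowerSeries.coeff m₁ (A (c k) * (A lam * P)) = c k * lam := by
      rw [hP, ← mul_assoc, ← map_mul]
      have : (A (c k * lam)) * MvPowerSeries.monomial m₁ 1
          = MvPowerSeries.monomial m₁ (c k * lam) := by
        rw [hA, ← MvPowerSeries.c_eq_algebraMap, ← MvPowerSeries.monomial_zero_eq_C_apply,
          MvPowerSeries.monomial_mul_monomial, zero_add, mul_one]
      rw [this, MvPowerSeries.coeff_monomial_same]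
    have e2 : MvPowerSeries.coeff m₁ (h 3 * (A lam * P)) =
        MvPowerSeries.coeff (0 : Fin n →₀ ℕ) (h 3) * lam := by
      have hAl : A lam * P = MvPowerSeries.monomial m₁ lam := by
        rw [hP, hA, ← MvPowerSeries.c_eq_algebraMap, ← MvPowerSeries.monomial_zero_eq_C_apply,
          MvPowerSeries.monomial_mul_monomial, zero_add, mul_one]
      rw [hAl, MvPowerSeries.coeff_mul_monomial, if_pos le_rfl, tsub_self]
    have e3 : MvPowerSeries.coeff m₁ (xi k (h 4)) = MvPowerSeries.coeff m₁ (h 4) := by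
      rw [MvPowerSeries.coeff_apply]
      show ((m₁ k : ℕ) : ℂ) * MvPowerSeries.coeff m₁ (h 4) = _
      rw [hm₁k k]; norm_num
    rw [e1, e2, e3] at this
    exact this
  intro k k'
  have h1 := hkey k
  have h2 := hkey k'
  have : c k * lam = c k' * lam := by linear_combination h2 - h1
  exact mul_right_cancel₀ hlam this
end
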